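/- Let G1 be an r1-regular graph with n1 vertices and m1 edges (r1 ≥ 1), G2 an r2-regular graph (r2 ≥ 1), G3 an r3-regular graph (r3 ≥ 1), and let 𝔊 = G1^S ◊ (G2^V ∪ G3^E). If μ ≠ 0 is an eigenvalue of 𝓛(G2) with multiplicity k, then (2 + r2·μ)/(r2 + 2) is an eigenvalue of 𝓛(𝔊) with multiplicity at least m1·k. -/

import Mathlib

open Matrix Polynomial BigOperators Kronecker

namespace NLS

variable {V : Type*}

/-- Adjacency matrix over `ℝ` (classical decidability). -/
noncomputable def adjMat (G : SimpleGraph V) : Matrix V V ℝ :=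
  letI := Classical.decRel G.Adj
  G.adjMatrix ℝ

/-- Degree of a vertex (classical decidability). -/
noncomputable def deg [Fintype V] (G : SimpleGraph V) (v : V) : ℕ :=
  letI := Classical.decRel G.Adj
  G.degree v

/-- The normalized Laplacian `I - D^{-1/2} A D^{-1/2}`. -/
noncomputable def normLap [Fintype V] (G : SimpleGraph V) : Matrix V V ℝ :=
  letI := Classical.decEq V
  1 - (Matrix.diagonal fun v => (Real.sqrt (deg G v))⁻¹) * adjMat G *
      (Matrix.diagonal fun v => (Real.sqrt (deg G v))⁻¹)

/-- `G` is `r`-regular. -/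
def IsReg [Fintype V] (G : SimpleGraph V) (r : ℕ) : Prop := ∀ v, deg G v = r

/-- Vertex-edge incidence matrix over `ℝ`. -/
def incMat [DecidableEq V] (G : SimpleGraph V) : Matrix V G.edgeSet ℝ :=
  Matrix.of fun v e => if v ∈ (e : Sym2 V) then 1 else 0

/-- The number of spanning trees of `G`. -/
noncomputable def numSpanningTrees [Fintype V] (G : SimpleGraph V) : ℕ :=
  Nat.card {H : SimpleGraph V // H ≤ G ∧ H.IsTree}

section Corona

variable {V1 V2 V3 : Type*}

/-- Adjacency for the subdivision vertex-edge neighbourhood **vertex**-corona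
`G1^S ⋈ (G2^V ∪ G3^E)`. Vertices: original `V1`, inserted `G1.edgeSet`,
copies of `G2` indexed by `V1`, copies of `G3` indexed by `G1.edgeSet`. -/
def svevAdj (G1 : SimpleGraph V1) (G2 : SimpleGraph V2) (G3 : SimpleGraph V3) :
    (V1 ⊕ (G1.edgeSet ⊕ ((V1 × V2) ⊕ (G1.edgeSet × V3)))) →
    (V1 ⊕ (G1.edgeSet ⊕ ((V1 × V2) ⊕ (G1.edgeSet × V3)))) → Prop
  | .inl v, .inr (.inl e) => v ∈ (e : Sym2 V1)
  | .inr (.inl e), .inl v => v ∈ (e : Sym2 V1)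
  | .inr (.inl e), .inr (.inr (.inl p)) => p.1 ∈ (e : Sym2 V1)
  | .inr (.inr (.inl p)), .inr (.inl e) => p.1 ∈ (e : Sym2 V1)
  | .inr (.inl e), .inr (.inr (.inr q)) => q.1 = e
  | .inr (.inr (.inr q)), .inr (.inl e) => q.1 = e
  | .inr (.inr (.inl p)), .inr (.inr (.inl p')) => p.1 = p'.1 ∧ G2.Adj p.2 p'.2
  | .inr (.inr (.inr q)), .inr (.inr (.inr q')) => q.1 = q'.1 ∧ G3.Adj q.2 q'.2
  | _, _ => False

/-- The subdivision vertex-edge neighbourhood vertex-corona `G1^S ⋈ (G2^V ∪ G3^E)`. -/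
def svev (G1 : SimpleGraph V1) (G2 : SimpleGraph V2) (G3 : SimpleGraph V3) :
    SimpleGraph (V1 ⊕ (G1.edgeSet ⊕ ((V1 × V2) ⊕ (G1.edgeSet × V3)))) where
  Adj := svevAdj G1 G2 G3
  symm := by
    constructor
    rintro (v|e|p|q) (v'|e'|p'|q') h <;>
      first
        | exact h
        | exact ⟨h.1.symm, h.2.symm⟩
        | exact h.elim
  loopless := by
    constructor
    rintro (v|e|p|q) h
    · exact h
    · exact h
    · exact G2.loopless.irrefl _ h.2
    · exact G3.loopless.irrefl _ h.2

/-- Adjacency for the subdivision vertex-edge neighbourhood **edge**-corona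
`G1^S ◊ (G2^V ∪ G3^E)`. Vertices: original `V1`, inserted `G1.edgeSet`,
copies of `G2` indexed by `G1.edgeSet`, copies of `G3` indexed by `V1`. -/
def sveeAdj (G1 : SimpleGraph V1) (G2 : SimpleGraph V2) (G3 : SimpleGraph V3) :
    (V1 ⊕ (G1.edgeSet ⊕ ((G1.edgeSet × V2) ⊕ (V1 × V3)))) →
    (V1 ⊕ (G1.edgeSet ⊕ ((G1.edgeSet × V2) ⊕ (V1 × V3)))) → Prop
  | .inl v, .inr (.inl e) => v ∈ (e : Sym2 V1)
  | .inr (.inl e), .inl v => v ∈ (e : Sym2 V1)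
  | .inl v, .inr (.inr (.inl p)) => v ∈ (p.1 : Sym2 V1)
  | .inr (.inr (.inl p)), .inl v => v ∈ (p.1 : Sym2 V1)
  | .inl v, .inr (.inr (.inr q)) => q.1 = v
  | .inr (.inr (.inr q)), .inl v => q.1 = v
  | .inr (.inr (.inl p)), .inr (.inr (.inl p')) => p.1 = p'.1 ∧ G2.Adj p.2 p'.2
  | .inr (.inr (.inr q)), .inr (.inr (.inr q')) => q.1 = q'.1 ∧ G3.Adj q.2 q'.2
  | _, _ => False

/-- The subdivision vertex-edge neighbourhood edge-corona `G1^S ◊ (G2^V ∪ G3^E)`. -/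
def svee (G1 : SimpleGraph V1) (G2 : SimpleGraph V2) (G3 : SimpleGraph V3) :
    SimpleGraph (V1 ⊕ (G1.edgeSet ⊕ ((G1.edgeSet × V2) ⊕ (V1 × V3)))) where
  Adj := sveeAdj G1 G2 G3
  symm := by
    constructor
    rintro (v|e|p|q) (v'|e'|p'|q') h <;>
      first
        | exact h
        | exact ⟨h.1.symm, h.2.symm⟩
        | exact h.elim
  loopless := by
    constructor
    rintro (v|e|p|q) h
    · exact h
    · exact h
    · exact G2.loopless.irrefl _ h.2
    · exact G3.loopless.irrefl _ h.2

end Corona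

/-!
Regularity of `G2` turns a `μ`-eigenvector `z` of `𝓛(G2)` into an eigenvector of the adjacency
matrix, `A z = r2 (1 - μ) z`; since `μ ≠ 0` the eigenvalue differs from `r2`, so `z ⊥ 𝟏`.
Put such vectors on the copies of `G2` (one per edge of `G1`) and zero elsewhere. An endpoint of
an edge sees only `∑ z = 0`, and every copy vertex has degree `r2 + 2`, so the result is an
eigenvector of `𝓛(𝔊)` for `1 - r2 (1 - μ) / (r2 + 2) = (2 + r2 μ) / (r2 + 2)`. This embeds `m1`
copies of the `μ`-eigenspace of `𝓛(G2)` into that eigenspace of `𝓛(𝔊)`, and for the symmetric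
matrices `𝓛(G2)` and `𝓛(𝔊)` eigenspace dimensions are root multiplicities of the characteristic
polynomials.
-/

open Module

lemma _root_.Matrix.IsHermitian.finrank_eigenspace_toLin' {𝕜 n : Type*} [RCLike 𝕜] [Fintype n]
    [DecidableEq n] {A : Matrix n n 𝕜} (hA : A.IsHermitian) (μ : 𝕜) :
    finrank 𝕜 (End.eigenspace (toLin' A) μ) = A.charpoly.rootMultiplicity μ := by
  have hss : End.IsSemisimple (toLin' A) :=
    ((WithLp.linearEquiv 2 𝕜 (n → 𝕜)).symm.isSemisimple_iff _ (toEuclideanLin A) rfl).mpr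
      (End.isFinitelySemisimple_iff_isSemisimple.mp
        (isSymmetric_toEuclideanLin_iff.mpr hA).isFinitelySemisimple)
  rw [← (End.isFinitelySemisimple_iff_isSemisimple.mpr hss).maxGenEigenspace_eq_eigenspace,
    LinearMap.finrank_maxGenEigenspace_eq, Matrix.charpoly_toLin']

section NormalizedLaplacian

variable {V : Type*}

lemma adjMat_apply (G : SimpleGraph V) (u v : V) [Decidable (G.Adj u v)] :
    adjMat G u v = if G.Adj u v then 1 else 0 := by
  split_ifs <;> simp_all [adjMat]

lemma adjMat_isSymm (G : SimpleGraph V) : (adjMat G).IsSymm := by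
  let := Classical.decRel G.Adj
  exact G.isSymm_adjMatrix

variable [Fintype V]

lemma adjMat_mulVec_eq_vecMul (G : SimpleGraph V) (x : V → ℝ) :
    adjMat G *ᵥ x = x ᵥ* adjMat G := by
  rw [← mulVec_transpose, (adjMat_isSymm G).eq]

lemma deg_eq_sum_adjMat (G : SimpleGraph V) (v : V) : (deg G v : ℝ) = ∑ u, adjMat G v u := by
  classical
  simp [deg, adjMat_apply, SimpleGraph.degree, SimpleGraph.neighborFinset_eq_filter]

lemma normLap_isHermitian (G : SimpleGraph V) : (normLap G).IsHermitian := by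
  classical
  unfold normLap
  convert isHermitian_one.sub <|
    isHermitian_mul_mul_conjTranspose _ (isHermitian_iff_isSymm.mpr (adjMat_isSymm G))
  exact (isHermitian_diagonal _).eq.symm

lemma normLap_mulVec (G : SimpleGraph V) (z : V → ℝ) :
    normLap G *ᵥ z =
      z - fun u => (√(deg G u))⁻¹ * (adjMat G *ᵥ fun v => (√(deg G v))⁻¹ * z v) u := by
  classical
  have hD (w : V → ℝ) :
      (diagonal fun v => (√(deg G v))⁻¹) *ᵥ w = fun v => (√(deg G v))⁻¹ * w v :=
    funext fun v => mulVec_diagonal _ _ v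
  simp only [normLap, sub_mulVec, one_mulVec, ← mulVec_mulVec, hD]

lemma normLap_mulVec_of_isReg {G : SimpleGraph V} {r : ℕ} (hG : IsReg G r) (z : V → ℝ) :
    normLap G *ᵥ z = z - (r : ℝ)⁻¹ • (adjMat G *ᵥ z) := by
  have hz : (fun v => (√(deg G v))⁻¹ * z v) = (√(r : ℝ))⁻¹ • z := by
    ext v
    simp [hG v]
  ext u
  simp only [normLap_mulVec, hz, mulVec_smul, Pi.sub_apply, Pi.smul_apply, smul_eq_mul]
  rw [hG u, ← mul_assoc, ← mul_inv, Real.mul_self_sqrt (Nat.cast_nonneg r)]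

lemma adjMat_mulVec_eq_of_normLap_mulVec_eq {G : SimpleGraph V} {r : ℕ} (hG : IsReg G r)
    (hr : r ≠ 0) {μ : ℝ} {z : V → ℝ} (hz : normLap G *ᵥ z = μ • z) :
    adjMat G *ᵥ z = ((r : ℝ) * (1 - μ)) • z := by
  have hr' : (r : ℝ) ≠ 0 := Nat.cast_ne_zero.mpr hr
  rw [normLap_mulVec_of_isReg hG] at hz
  ext u
  have hu := congrFun hz u
  simp only [Pi.sub_apply, Pi.smul_apply, smul_eq_mul] at hu ⊢
  field_simp at hu
  linear_combination -hu

lemma normLap_mulVec_eq_of_adjMat_mulVec_eq {G : SimpleGraph V} {d : ℕ} {a : ℝ} {x : V → ℝ}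
    (hx : ∀ u, x u ≠ 0 → deg G u = d) (hA : adjMat G *ᵥ x = a • x) :
    normLap G *ᵥ x = (1 - a / d) • x := by
  have hx' : (fun v => (√(deg G v))⁻¹ * x v) = (√(d : ℝ))⁻¹ • x := by
    ext v
    by_cases h : x v = 0
    · simp [h]
    · simp [hx v h]
  ext u
  simp only [normLap_mulVec, hx', mulVec_smul, hA, Pi.sub_apply, Pi.smul_apply, smul_eq_mul]
  by_cases h : x u = 0
  · simp [h]
  · rw [hx u h, ← mul_assoc, ← mul_assoc, ← mul_inv, Real.mul_self_sqrt (Nat.cast_nonneg d)]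
    ring

lemma sum_eq_zero_of_adjMat_mulVec_eq {G : SimpleGraph V} {r : ℕ} (hG : IsReg G r) {c : ℝ}
    (hc : c ≠ r) {z : V → ℝ} (hz : adjMat G *ᵥ z = c • z) : ∑ v, z v = 0 := by
  have hsum : ∑ v, (adjMat G *ᵥ z) v = r * ∑ v, z v := by
    rw [adjMat_mulVec_eq_vecMul]
    simp only [vecMul, dotProduct, Finset.mul_sum]
    rw [Finset.sum_comm]
    refine Finset.sum_congr rfl fun u _ => ?_
    rw [← Finset.mul_sum, ← hG u, deg_eq_sum_adjMat, mul_comm]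
  simp only [hz, Pi.smul_apply, smul_eq_mul, ← Finset.mul_sum] at hsum
  exact (mul_eq_mul_right_iff.mp hsum).resolve_left hc

end NormalizedLaplacian

section EdgeCorona

variable {V1 V2 V3 : Type*} {G1 : SimpleGraph V1}

def liftCopiesG2 :
    (G1.edgeSet → V2 → ℝ) →ₗ[ℝ] (V1 ⊕ (G1.edgeSet ⊕ ((G1.edgeSet × V2) ⊕ (V1 × V3))) → ℝ) where
  toFun f := Sum.elim 0 (Sum.elim 0 (Sum.elim (fun p => f p.1 p.2) 0))
  map_add' _ _ := by ext (v | e | p | q) <;> simp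
  map_smul' _ _ := by ext (v | e | p | q) <;> simp

lemma liftCopiesG2_injective :
    Function.Injective (liftCopiesG2 (G1 := G1) (V2 := V2) (V3 := V3)) := fun _ _ h =>
  funext fun e => funext fun w => congrFun h (.inr (.inr (.inl (e, w))))

variable (G2 : SimpleGraph V2) (G3 : SimpleGraph V3)

@[simp] lemma svee_adj_copyG2_inl (p : G1.edgeSet × V2) (v : V1) :
    (svee G1 G2 G3).Adj (.inr (.inr (.inl p))) (.inl v) ↔ v ∈ (p.1 : Sym2 V1) := Iff.rfl

@[simp] lemma svee_not_adj_copyG2_inserted (p : G1.edgeSet × V2) (e : G1.edgeSet) :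
    ¬ (svee G1 G2 G3).Adj (.inr (.inr (.inl p))) (.inr (.inl e)) := id

@[simp] lemma svee_adj_copyG2_copyG2 (p q : G1.edgeSet × V2) :
    (svee G1 G2 G3).Adj (.inr (.inr (.inl p))) (.inr (.inr (.inl q))) ↔
      p.1 = q.1 ∧ G2.Adj p.2 q.2 :=
  Iff.rfl

@[simp] lemma svee_not_adj_copyG2_copyG3 (p : G1.edgeSet × V2) (q : V1 × V3) :
    ¬ (svee G1 G2 G3).Adj (.inr (.inr (.inl p))) (.inr (.inr (.inr q))) := id

variable [Fintype V1] [Fintype G1.edgeSet] [Fintype V2] [Fintype V3]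

lemma deg_svee_copyG2 (e : G1.edgeSet) (w : V2) :
    deg (svee G1 G2 G3) (.inr (.inr (.inl (e, w)))) = deg G2 w + 2 := by
  classical
  have hends : (Finset.univ.filter (· ∈ (e : Sym2 V1))).card = 2 := by
    rw [← Sym2.card_toFinset_of_not_isDiag _ (G1.not_isDiag_of_mem_edgeSet e.2)]
    congr 1
    ext v
    simp [Sym2.mem_toFinset]
  suffices (deg (svee G1 G2 G3) (.inr (.inr (.inl (e, w)))) : ℝ) = deg G2 w + 2 by
    exact_mod_cast this
  simp only [deg_eq_sum_adjMat, Fintype.sum_sum_type, Fintype.sum_prod_type, adjMat_apply,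
    svee_adj_copyG2_inl, svee_not_adj_copyG2_inserted, svee_adj_copyG2_copyG2,
    svee_not_adj_copyG2_copyG3]
  simp only [Finset.sum_boole, hends, Nat.cast_ofNat, ↓reduceIte, Finset.sum_const_zero, add_comm,
    zero_add, add_right_inj]
  rw [Finset.sum_eq_single e (fun e' _ he' => by simp [Ne.symm he']) (by simp)]
  simp

lemma adjMat_svee_mulVec_liftCopiesG2 {f : G1.edgeSet → V2 → ℝ} (hf : ∀ e, ∑ w, f e w = 0) :
    adjMat (svee G1 G2 G3) *ᵥ liftCopiesG2 f = liftCopiesG2 fun e => adjMat G2 *ᵥ f e := by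
  classical
  simp only [adjMat_mulVec_eq_vecMul]
  ext (v | e | ⟨e, w⟩ | q) <;>
    simp only [vecMul, dotProduct, liftCopiesG2, LinearMap.coe_mk, AddHom.coe_mk, adjMat_apply,
      mul_ite, mul_one, mul_zero, Fintype.sum_sum_type, Fintype.sum_prod_type, Sum.elim_inl,
      Sum.elim_inr, Pi.zero_apply, ite_self, Finset.sum_const_zero, Finset.sum_ite_irrel, hf,
      svee_adj_copyG2_inl, svee_not_adj_copyG2_inserted, svee_adj_copyG2_copyG2,
      svee_not_adj_copyG2_copyG3, ↓reduceIte, add_zero, zero_add]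
  rw [Finset.sum_eq_single e (fun e' _ he' => by simp [he']) (by simp)]
  simp

variable {G2}

lemma normLap_svee_mulVec_liftCopiesG2 {r2 : ℕ} (hG2 : IsReg G2 r2) (hr2 : r2 ≠ 0) {μ : ℝ}
    (hμ : μ ≠ 0) {f : G1.edgeSet → V2 → ℝ} (hf : ∀ e, normLap G2 *ᵥ f e = μ • f e) :
    normLap (svee G1 G2 G3) *ᵥ liftCopiesG2 f =
      ((2 + r2 * μ) / (r2 + 2)) • liftCopiesG2 f := by
  have hr2' : (r2 : ℝ) ≠ 0 := Nat.cast_ne_zero.mpr hr2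
  have hA e := adjMat_mulVec_eq_of_normLap_mulVec_eq hG2 hr2 (hf e)
  have hsum e : ∑ w, f e w = 0 := by
    refine sum_eq_zero_of_adjMat_mulVec_eq hG2 (fun h => hμ ?_) (hA e)
    simpa [hr2'] using (by linarith : (r2 : ℝ) * μ = 0)
  have hA' : adjMat (svee G1 G2 G3) *ᵥ liftCopiesG2 f = (r2 * (1 - μ)) • liftCopiesG2 f := by
    rw [adjMat_svee_mulVec_liftCopiesG2 G2 G3 hsum, ← map_smul]
    exact congrArg _ (funext hA)
  have hdeg : ∀ u, liftCopiesG2 f u ≠ 0 → deg (svee G1 G2 G3) u = r2 + 2 := by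
    rintro (v | e | ⟨e, w⟩ | q) h
    case inr.inr.inl => rw [deg_svee_copyG2, hG2 w]
    all_goals exact absurd rfl h
  rw [normLap_mulVec_eq_of_adjMat_mulVec_eq hdeg hA']
  congr 1
  push_cast
  field_simp
  ring

lemma card_mul_finrank_eigenspace_le_finrank_eigenspace_svee [DecidableEq V1] [DecidableEq V2]
    [DecidableEq V3] {r2 : ℕ} (hG2 : IsReg G2 r2) (hr2 : r2 ≠ 0) {μ : ℝ} (hμ : μ ≠ 0) :
    Fintype.card G1.edgeSet * finrank ℝ (End.eigenspace (toLin' (normLap G2)) μ) ≤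
      finrank ℝ (End.eigenspace (toLin' (normLap (svee G1 G2 G3))) ((2 + r2 * μ) / (r2 + 2))) := by
  set E := End.eigenspace (toLin' (normLap G2)) μ
  let Φ : (G1.edgeSet → E) →ₗ[ℝ] End.eigenspace (toLin' (normLap (svee G1 G2 G3))) _ :=
    (liftCopiesG2 ∘ₗ LinearMap.pi fun e => E.subtype ∘ₗ LinearMap.proj e).codRestrict _ fun f =>
      End.mem_eigenspace_iff.mpr <| normLap_svee_mulVec_liftCopiesG2 G3 hG2 hr2 hμ fun e =>
        End.mem_eigenspace_iff.mp (f e).2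
  have hΦ : Function.Injective Φ := fun f g h =>
    funext fun e => Subtype.ext <| congrFun (liftCopiesG2_injective (congrArg Subtype.val h)) e
  calc Fintype.card G1.edgeSet * finrank ℝ E = finrank ℝ (G1.edgeSet → E) := by
        simp [Module.finrank_pi_fintype]
    _ ≤ _ := LinearMap.finrank_le_finrank_of_injective hΦ

end EdgeCorona

theorem stmt_11_general {V1 V2 V3 : Type*} [Fintype V1] [DecidableEq V1]
    [Fintype V2] [DecidableEq V2] [Fintype V3] [DecidableEq V3]
    (G1 : SimpleGraph V1) (G2 : SimpleGraph V2) (G3 : SimpleGraph V3)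
    [Fintype G1.edgeSet]
    (r2 : ℕ) (hr2 : 1 ≤ r2)
    (h2 : IsReg G2 r2)
    (μ : ℝ) (hμ : μ ≠ 0) (k : ℕ)
    (hmult : (X - C μ) ^ k ∣ (normLap G2).charpoly) :
    (X - C ((2 + (r2 : ℝ) * μ) / ((r2 : ℝ) + 2))) ^ (Fintype.card G1.edgeSet * k) ∣
      (normLap (svee G1 G2 G3)).charpoly := by
  have hk : k ≤ finrank ℝ (End.eigenspace (toLin' (normLap G2)) μ) := by
    rwa [(normLap_isHermitian G2).finrank_eigenspace_toLin',
      le_rootMultiplicity_iff (charpoly_monic _).ne_zero]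
  rw [← le_rootMultiplicity_iff (charpoly_monic _).ne_zero,
    ← (normLap_isHermitian _).finrank_eigenspace_toLin']
  exact (Nat.mul_le_mul_left _ hk).trans
    (card_mul_finrank_eigenspace_le_finrank_eigenspace_svee G3 h2 (by omega) hμ)

theorem stmt_11 {V1 V2 V3 : Type*} [Fintype V1] [DecidableEq V1]
    [Fintype V2] [DecidableEq V2] [Fintype V3] [DecidableEq V3]
    (G1 : SimpleGraph V1) (G2 : SimpleGraph V2) (G3 : SimpleGraph V3)
    [Fintype G1.edgeSet]
    (r1 r2 r3 : ℕ) (hr1 : 1 ≤ r1) (hr2 : 1 ≤ r2) (hr3 : 1 ≤ r3)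
    (h1 : IsReg G1 r1) (h2 : IsReg G2 r2) (h3 : IsReg G3 r3)
    (μ : ℝ) (hμ : μ ≠ 0) (k : ℕ)
    (hmult : (X - C μ) ^ k ∣ (normLap G2).charpoly) :
    (X - C ((2 + (r2 : ℝ) * μ) / ((r2 : ℝ) + 2))) ^ (Fintype.card G1.edgeSet * k) ∣
      (normLap (svee G1 G2 G3)).charpoly :=
  stmt_11_general G1 G2 G3 r2 hr2 h2 μ hμ k hmult

end NLS
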